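/- arXiv:1109.3210 — 3 statements merged into one kernel-verified Lean document; each statement's English description precedes it below -/
import Mathlib

section
/- Let ν ∈ 𝔤*, ν̂ = (ν,0) ∈ ĝ*, and let 𝕀: 𝔤 → 𝔤* and 𝕀̂: ĝ → ĝ* be invertible symmetric positive-definite inertia operators with 𝕀̂(ξ,a) = (𝕀ξ, Qa) for some invertible Q: 𝔞 → 𝔞*. Then the invariant-measure condition (1/⟨ν̂, 𝕀̂⁻¹ν̂⟩) ad*_{𝕀̂⁻¹ν̂} ν̂ + T̂ = c ν̂ holds in ĝ* for some c ∈ ℝ if and only if (1/⟨ν, 𝕀⁻¹ν⟩) ad*_{𝕀⁻¹ν} ν + T = c ν holds in 𝔤* for the same c, where T̂ = (T,0) are the modular covectors. -/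
/-- Jovanović's invariant-measure condition on the central extension
`ĝ = 𝔤 × 𝔞` (with cocycle `C` and block-diagonal inertia operator `𝕀̂ = (𝕀, Q)`)
holds for the lifted constraint covector `ν̂ = (ν, 0)` and a constant `c` if and
only if the corresponding condition holds on `𝔤` for `ν` and the same `c`.
Both conditions are stated as equalities of covectors, evaluated on arbitrary
elements, with `T̂ = (T,0)` the modular covectors given by traces of the adjoint
operators. -/
theorem invariant_measure_condition_iff
    {𝔤 : Type*} [LieRing 𝔤] [LieAlgebra ℝ 𝔤] [FiniteDimensional ℝ 𝔤]
    {𝔞 : Type*} [AddCommGroup 𝔞] [Module ℝ 𝔞] [FiniteDimensional ℝ 𝔞]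
    (C : 𝔤 →ₗ[ℝ] 𝔤 →ₗ[ℝ] 𝔞)
    (𝕀 : 𝔤 ≃ₗ[ℝ] Module.Dual ℝ 𝔤) (Q : 𝔞 ≃ₗ[ℝ] Module.Dual ℝ 𝔞)
    (h𝕀sym : ∀ x y : 𝔤, 𝕀 x y = 𝕀 y x)
    (h𝕀pos : ∀ x : 𝔤, x ≠ 0 → 0 < 𝕀 x x)
    (hQsym : ∀ a b : 𝔞, Q a b = Q b a)
    (hQpos : ∀ a : 𝔞, a ≠ 0 → 0 < Q a a)
    (ν : Module.Dual ℝ 𝔤) (hν : ν ≠ 0) (c : ℝ) :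
    -- `x̂ = 𝕀̂⁻¹ ν̂ = (𝕀⁻¹ ν, Q⁻¹ 0)`, `ν̂ = (ν, 0)`
    (∀ (η : 𝔤) (b : 𝔞),
        (ν (𝕀.symm ν) + (0 : Module.Dual ℝ 𝔞) (Q.symm 0))⁻¹ *
          (LinearMap.coprod ν (0 : Module.Dual ℝ 𝔞)
            (⁅𝕀.symm ν, η⁆, C (𝕀.symm ν) η)) +
        LinearMap.trace ℝ (𝔤 × 𝔞)
          (LinearMap.prod
            (((LieAlgebra.ad ℝ 𝔤 η) : 𝔤 →ₗ[ℝ] 𝔤).comp (LinearMap.fst ℝ 𝔤 𝔞))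
            ((C η).comp (LinearMap.fst ℝ 𝔤 𝔞)))
        = c * (LinearMap.coprod ν (0 : Module.Dual ℝ 𝔞) (η, b)))
    ↔
    (∀ η : 𝔤,
        (ν (𝕀.symm ν))⁻¹ * (ν ⁅𝕀.symm ν, η⁆) +
          LinearMap.trace ℝ 𝔤 ((LieAlgebra.ad ℝ 𝔤 η) : 𝔤 →ₗ[ℝ] 𝔤)
        = c * ν η) := by
  have htr : ∀ η : 𝔤,
      LinearMap.trace ℝ (𝔤 × 𝔞)
        (LinearMap.prod
          (((LieAlgebra.ad ℝ 𝔤 η) : 𝔤 →ₗ[ℝ] 𝔤).comp (LinearMap.fst ℝ 𝔤 𝔞))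
          ((C η).comp (LinearMap.fst ℝ 𝔤 𝔞)))
      = LinearMap.trace ℝ 𝔤 ((LieAlgebra.ad ℝ 𝔤 η) : 𝔤 →ₗ[ℝ] 𝔤) := by
    intro η
    have h1 : LinearMap.prod
        (((LieAlgebra.ad ℝ 𝔤 η) : 𝔤 →ₗ[ℝ] 𝔤).comp (LinearMap.fst ℝ 𝔤 𝔞))
        ((C η).comp (LinearMap.fst ℝ 𝔤 𝔞))
        = (LinearMap.prod ((LieAlgebra.ad ℝ 𝔤 η) : 𝔤 →ₗ[ℝ] 𝔤) (C η)).comp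
            (LinearMap.fst ℝ 𝔤 𝔞) := by
      ext x <;> rfl
    rw [h1, LinearMap.trace_comp_comm']
    congr 1
  constructor
  · intro h η
    have := h η 0
    simpa [htr η] using this
  · intro h η b
    have := h η
    simpa [htr η] using this
end

section
/- The function B₁: SE(2) × SE(2) → ℝ defined by B₁((R_θ, x), (R_{θ'}, x')) = (1/2) x · 𝕁 R_θ x', where 𝕁 = [[0,1],[-1,0]], is a normalized group two-cocycle on SE(2): it satisfies B₁(f,g) + B₁(fg,h) = B₁(f,gh) + B₁(g,h) for all f,g,h ∈ SE(2), and B₁(g,e) = B₁(e,g) = 0. -/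
/-- Rotation of the plane by angle `θ`. -/
noncomputable def rot (θ : ℝ) (p : ℝ × ℝ) : ℝ × ℝ :=
  (Real.cos θ * p.1 - Real.sin θ * p.2, Real.sin θ * p.1 + Real.cos θ * p.2)

/-- Multiplication of `SE(2)`, elements written as `(θ, x)`:
`(R_θ, x)(R_{θ'}, x') = (R_{θ+θ'}, x + R_θ x')`. -/
noncomputable def se2Mul (f g : ℝ × (ℝ × ℝ)) : ℝ × (ℝ × ℝ) :=
  (f.1 + g.1, f.2 + rot f.1 g.2)

/-- `B₁((R_θ,x),(R_{θ'},x')) = (1/2) x · 𝕁 R_θ x'` with `𝕁 = [[0,1],[-1,0]]`. -/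
noncomputable def B1 (f g : ℝ × (ℝ × ℝ)) : ℝ :=
  (1 / 2) * (f.2.1 * (rot f.1 g.2).2 - f.2.2 * (rot f.1 g.2).1)

/-- `B₁` is a normalized group two-cocycle on `SE(2)`. -/
theorem B1_is_normalized_cocycle :
    (∀ f g h : ℝ × (ℝ × ℝ),
      B1 f g + B1 (se2Mul f g) h = B1 f (se2Mul g h) + B1 g h) ∧
    (∀ g : ℝ × (ℝ × ℝ), B1 g (0, (0, 0)) = 0) ∧
    (∀ g : ℝ × (ℝ × ℝ), B1 (0, (0, 0)) g = 0) := by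
  refine ⟨?_, ?_, ?_⟩
  · intro f g h
    simp only [B1, se2Mul, rot, Real.cos_add, Real.sin_add, Prod.fst_add, Prod.snd_add]
    have h1 := Real.sin_sq_add_cos_sq f.1
    linear_combination (1 / 2 * (g.2.1 * (Real.sin g.1 * h.2.1 + Real.cos g.1 * h.2.2) -
      g.2.2 * (Real.cos g.1 * h.2.1 - Real.sin g.1 * h.2.2))) * h1
  · intro g; simp [B1, rot]
  · intro g; simp [B1, rot]
end

section
/- For the Lie algebra ĝ = ℝ³ × ℝ³ with bracket [(u;z),(u';z')] = ((0, u₃u'₁ - u₁u'₃, u₁u'₂ - u₂u'₁); u × u') (where u = (u₁,u₂,u₃) with u₁ the angular part, and × is the cross product), the quadratic function F̄(μ,σ) = p₁² + p₂² + 2σ₀k + 2σ₁p₁ + 2σ₂p₂ on the dual ĝ* (with coordinates μ = (k,p₁,p₂), σ = (σ₀,σ₁,σ₂)) is a Casimir of the minus Lie-Poisson bracket: {F̄, K}⁻ = 0 for every smooth K. -/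
/-!
Only the `μ = (k, p₁, p₂)` block of `Λ` is nonzero, and it is the cross-product matrix of
`w = (σ₀, p₁ + σ₁, p₂ + σ₂)`; hence `{F, K}⁻ = -w · (∇_μ F × ∇_μ K)`. Since `∇_μ F̄ = 2w`,
the triple product has two parallel factors and vanishes, whatever `K` is.
-/

/-- Partial derivative in the `i`-th coordinate direction of a function on `ℝ⁶`. -/
noncomputable def pd (i : Fin 6) (F : (Fin 6 → ℝ) → ℝ) (ν : Fin 6 → ℝ) : ℝ :=
  fderiv ℝ F ν (Pi.single i 1)

/-- The minus Lie-Poisson bracket on `ĝ* ≅ ℝ⁶`, coordinates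
`(k, p₁, p₂, σ₀, σ₁, σ₂) = (ν 0, …, ν 5)`, with matrix entries
`Λ₀₁ = -(p₂+σ₂)`, `Λ₀₂ = p₁+σ₁`, `Λ₁₂ = -σ₀` (antisymmetric, rest zero). -/
noncomputable def liePoisson (F K : (Fin 6 → ℝ) → ℝ) (ν : Fin 6 → ℝ) : ℝ :=
  (-(ν 2 + ν 5)) * (pd 0 F ν * pd 1 K ν - pd 1 F ν * pd 0 K ν) +
  (ν 1 + ν 4) * (pd 0 F ν * pd 2 K ν - pd 2 F ν * pd 0 K ν) +
  (-(ν 3)) * (pd 1 F ν * pd 2 K ν - pd 2 F ν * pd 1 K ν)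

open Matrix

def bracketAxis (ν : Fin 6 → ℝ) : Fin 3 → ℝ := ![ν 3, ν 1 + ν 4, ν 2 + ν 5]

noncomputable def muGradient (F : (Fin 6 → ℝ) → ℝ) (ν : Fin 6 → ℝ) : Fin 3 → ℝ :=
  ![pd 0 F ν, pd 1 F ν, pd 2 F ν]

theorem liePoisson_eq_neg_triple_product (F K : (Fin 6 → ℝ) → ℝ) (ν : Fin 6 → ℝ) :
    liePoisson F K ν = -(bracketAxis ν ⬝ᵥ muGradient F ν ⨯₃ muGradient K ν) := by
  simp only [liePoisson, bracketAxis, muGradient, cross_apply, dotProduct, Fin.sum_univ_three,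
    cons_val_zero, cons_val_one, cons_val]
  ring

theorem liePoisson_eq_zero_of_muGradient_eq_smul {F : (Fin 6 → ℝ) → ℝ} {ν : Fin 6 → ℝ}
    {c : ℝ} (hF : muGradient F ν = c • bracketAxis ν) (K : (Fin 6 → ℝ) → ℝ) :
    liePoisson F K ν = 0 := by
  rw [liePoisson_eq_neg_triple_product, hF, LinearMap.map_smul₂, dotProduct_smul,
    dot_self_cross, smul_zero, neg_zero]

noncomputable def Fbar (ν : Fin 6 → ℝ) : ℝ :=
  (ν 1) ^ 2 + (ν 2) ^ 2 + 2 * ν 3 * ν 0 + 2 * ν 4 * ν 1 + 2 * ν 5 * ν 2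

theorem muGradient_Fbar (ν : Fin 6 → ℝ) : muGradient Fbar ν = (2 : ℝ) • bracketAxis ν := by
  have fderiv_coord (i : Fin 6) :
      fderiv ℝ (fun ν : Fin 6 → ℝ => ν i) ν = ContinuousLinearMap.proj i :=
    (hasFDerivAt_apply i ν).fderiv
  unfold Fbar
  ext j
  fin_cases j <;>
    simp (disch := fun_prop) [muGradient, bracketAxis, pd, fderiv_fun_add, fderiv_fun_mul,
      fderiv_fun_pow, fderiv_coord, Pi.single_apply] <;>
    ring

/-- The function `F̄(μ,σ) = p₁² + p₂² + 2σ₀k + 2σ₁p₁ + 2σ₂p₂` is a Casimir of the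
minus Lie-Poisson bracket on `ĝ*`: its bracket with every smooth `K` vanishes. -/
theorem Fbar_is_casimir :
    ∀ K : (Fin 6 → ℝ) → ℝ, Differentiable ℝ K → ∀ ν : Fin 6 → ℝ,
      liePoisson
        (fun ν => (ν 1) ^ 2 + (ν 2) ^ 2 + 2 * ν 3 * ν 0 + 2 * ν 4 * ν 1 +
          2 * ν 5 * ν 2)
        K ν = 0 :=
  fun K _ ν => liePoisson_eq_zero_of_muGradient_eq_smul (muGradient_Fbar ν) K
end
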